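/- arXiv:2203.14070 — 5 statements merged into one kernel-verified Lean document; each statement's English description precedes it below -/
import Mathlib

section
/- Let S be a feasible schedule of a BPMSTP instance. Then there exist at least (∏_{d ∈ P_J} |J_d|!) − 1 feasible schedules, pairwise distinct and each distinct from S, every one of which is equivalent to S (i.e., has the same makespan and the same total energy cost as S). -/
/-- A BPMSTP instance: `N` jobs with processing times `p j` (`1 ≤ p j ≤ K`),
`M` machines with energy consumption rates `u h ≥ 0`, and a time horizon
`{1, …, K}` of time slots with costs `c t ≥ 0`. -/
structure BInstance where
  N : ℕ
  M : ℕ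
  K : ℕ
  hN : 0 < N
  hM : 0 < M
  hK : 0 < K
  p : Fin N → ℕ
  hp : ∀ j, 1 ≤ p j ∧ p j ≤ K
  u : Fin M → ℝ
  hu : ∀ h, 0 ≤ u h
  c : ℕ → ℝ
  hc : ∀ t, 0 ≤ c t

/-- A schedule assigns each job a machine and a set of `p j` time slots,
with jobs on the same machine using disjoint slot sets. -/
structure Schedule (I : BInstance) where
  mach : Fin I.N → Fin I.M
  slots : Fin I.N → Finset ℕ
  slots_subset : ∀ j, slots j ⊆ Finset.Icc 1 I.K
  slots_card : ∀ j, (slots j).card = I.p j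
  disj : ∀ j j', j ≠ j' → mach j = mach j' → Disjoint (slots j) (slots j')

namespace Schedule

variable {I : BInstance}

/-- A schedule is feasible if every job occupies consecutive time slots. -/
def Feasible (S : Schedule I) : Prop :=
  ∀ j, ∃ s, S.slots j = Finset.Ico s (s + I.p j)

/-- The makespan: the largest slot used by any job. -/
def Cmax (S : Schedule I) : ℕ :=
  Finset.univ.sup fun j => (S.slots j).sup id

/-- The total energy cost. -/
def TEC (S : Schedule I) : ℝ :=
  ∑ j, I.u (S.mach j) * ∑ t ∈ S.slots j, I.c t

/-- Two schedules are equivalent if they have the same makespan and the same TEC. -/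
def Equivalent (S S' : Schedule I) : Prop :=
  S.Cmax = S'.Cmax ∧ S.TEC = S'.TEC

theorem slots_nonempty (S : Schedule I) (j : Fin I.N) : (S.slots j).Nonempty := by
  rw [← Finset.card_pos, S.slots_card]
  exact (I.hp j).1

/-- Slot `t` is occupied on machine `h`: some job assigned to `h` contains `t`. -/
def Occupied (S : Schedule I) (h : Fin I.M) (t : ℕ) : Prop :=
  ∃ j, S.mach j = h ∧ t ∈ S.slots j

/-- A split-schedule: for every job `j`, every slot between `min (T j)` and
`max (T j)` is occupied on the machine of `j`. -/
def IsSplit (S : Schedule I) : Prop :=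
  ∀ j t, (S.slots j).min' (S.slots_nonempty j) ≤ t →
    t ≤ (S.slots j).max' (S.slots_nonempty j) → S.Occupied (S.mach j) t

/-- `S` dominates `S'`. -/
def Dominates (S S' : Schedule I) : Prop :=
  S.Cmax ≤ S'.Cmax ∧ S.TEC ≤ S'.TEC ∧ (S.Cmax < S'.Cmax ∨ S.TEC < S'.TEC)

end Schedule

/-- The set of distinct processing times. -/
def PJ (I : BInstance) : Finset ℕ := Finset.univ.image I.p

/-- The set of jobs with processing time `d`. -/
def Jd (I : BInstance) (d : ℕ) : Finset (Fin I.N) := Finset.univ.filter fun j => I.p j = d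

/-- The makespan lower bound `max { ⌊(∑ p j) / M⌋, max p j }`. -/
def Klb (I : BInstance) : ℕ := max ((∑ j, I.p j) / I.M) (Finset.univ.sup I.p)

/-- `bcost I d t = ∑_{k=t}^{t+d-1} c k`, the cumulative cost of `d` slots from `t`. -/
def bcost (I : BInstance) (d t : ℕ) : ℝ := ∑ k ∈ Finset.Icc t (t + d - 1), I.c k

section Aux

variable {I : BInstance}

/-- The fiber of jobs with processing time `d`, as a type. -/
abbrev BFiber (I : BInstance) (d : ℕ) : Type := {j : Fin I.N // I.p j = d}

/-- A permutation of `Fin I.N` built from fiberwise permutations. -/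
def toPerm (I : BInstance) (πe : ∀ d : ℕ, Equiv.Perm (BFiber I d)) :
    Equiv.Perm (Fin I.N) :=
  (Equiv.sigmaFiberEquiv I.p).symm.trans
    ((Equiv.sigmaCongrRight πe).trans (Equiv.sigmaFiberEquiv I.p))

lemma toPerm_apply (πe : ∀ d : ℕ, Equiv.Perm (BFiber I d)) (j : Fin I.N) :
    toPerm I πe j = (πe (I.p j) ⟨j, rfl⟩).1 := rfl

lemma toPerm_p (πe : ∀ d : ℕ, Equiv.Perm (BFiber I d)) (j : Fin I.N) :
    I.p (toPerm I πe j) = I.p j :=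
  (πe (I.p j) ⟨j, rfl⟩).2

/-- Extend a family of permutations over `PJ I` to all of `ℕ` by the identity. -/
def extPerm (π : ∀ d : {x // x ∈ PJ I}, Equiv.Perm (BFiber I d.1)) :
    ∀ d : ℕ, Equiv.Perm (BFiber I d) :=
  fun d => if h : d ∈ PJ I then π ⟨d, h⟩ else 1

/-- The schedule obtained from `S` by permuting jobs by `σ`. -/
def permSched (S : Schedule I) (σ : Equiv.Perm (Fin I.N))
    (hσ : ∀ j, I.p (σ j) = I.p j) : Schedule I where
  mach j := S.mach (σ j)
  slots j := S.slots (σ j)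
  slots_subset j := S.slots_subset _
  slots_card j := by rw [S.slots_card, hσ]
  disj j j' h hm := S.disj _ _ (fun e => h (σ.injective e)) hm

lemma permSched_feasible (S : Schedule I) (hS : S.Feasible) (σ : Equiv.Perm (Fin I.N))
    (hσ : ∀ j, I.p (σ j) = I.p j) : (permSched S σ hσ).Feasible := by
  intro j
  obtain ⟨s, hs⟩ := hS (σ j)
  exact ⟨s, by simpa [permSched, hσ j] using hs⟩

lemma permSched_equiv (S : Schedule I) (σ : Equiv.Perm (Fin I.N))
    (hσ : ∀ j, I.p (σ j) = I.p j) : (permSched S σ hσ).Equivalent S := by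
  constructor
  · apply le_antisymm
    · exact Finset.sup_le fun j _ =>
        Finset.le_sup (f := fun j => (S.slots j).sup id) (Finset.mem_univ (σ j))
    · refine Finset.sup_le fun j _ => ?_
      have h1 : (S.slots j).sup id = ((permSched S σ hσ).slots (σ.symm j)).sup id := by
        simp [permSched]
      rw [h1]
      exact Finset.le_sup (f := fun j => ((permSched S σ hσ).slots j).sup id)
        (Finset.mem_univ (σ.symm j))
  · show ∑ j, I.u (S.mach (σ j)) * ∑ t ∈ S.slots (σ j), I.c t = _
    exact Equiv.sum_comp σ fun j => I.u (S.mach j) * ∑ t ∈ S.slots j, I.c t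

end Aux

/-- For every feasible schedule `S` there exist at least
`(∏_{d ∈ P_J} |J_d|!) − 1` feasible schedules, pairwise distinct and each
distinct from `S`, all equivalent to `S`. -/
theorem statement0 (I : BInstance) (S : Schedule I) (hS : S.Feasible) :
    ∃ F : Finset (Schedule I),
      (∏ d ∈ PJ I, (Jd I d).card.factorial) - 1 ≤ F.card ∧
      S ∉ F ∧
      ∀ S' ∈ F, S'.Feasible ∧ S'.Equivalent S := by
  classical
  set Dom := ∀ d : {x // x ∈ PJ I}, Equiv.Perm (BFiber I d.1) with hDom
  let Φ : Dom → Schedule I := fun π =>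
    permSched S (toPerm I (extPerm π)) (toPerm_p (extPerm π))
  have hΦinj : Function.Injective Φ := by
    intro π π' h
    have hslots : ∀ j, S.slots (toPerm I (extPerm π) j) =
        S.slots (toPerm I (extPerm π') j) :=
      fun j => congrFun (congrArg Schedule.slots h) j
    have hmach : ∀ j, S.mach (toPerm I (extPerm π) j) =
        S.mach (toPerm I (extPerm π') j) :=
      fun j => congrFun (congrArg Schedule.mach h) j
    have hσ : ∀ j, toPerm I (extPerm π) j = toPerm I (extPerm π') j := by
      intro j
      by_contra hne
      have hd := S.disj _ _ hne (hmach j)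
      rw [hslots j] at hd
      exact (S.slots_nonempty _).ne_empty (disjoint_self.mp hd)
    have key : ∀ (ρ : Dom) (d : ℕ) (hd : d ∈ PJ I) (j : Fin I.N) (hj : I.p j = d),
        ((ρ ⟨d, hd⟩) ⟨j, hj⟩ : Fin I.N) = toPerm I (extPerm ρ) j := by
      intro ρ d hd j hj
      cases hj
      rw [toPerm_apply]
      simp [extPerm, dif_pos hd]
    funext d
    apply Equiv.ext
    intro x
    apply Subtype.ext
    rw [show x = ⟨x.1, x.2⟩ from rfl, key π d.1 d.2 x.1 x.2, key π' d.1 d.2 x.1 x.2,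
      hσ x.1]
  have hcard : Fintype.card Dom = ∏ d ∈ PJ I, (Jd I d).card.factorial := by
    rw [Fintype.card_pi]
    rw [← Finset.prod_coe_sort (PJ I) (fun d => (Jd I d).card.factorial)]
    refine Finset.prod_congr rfl fun d _ => ?_
    rw [Fintype.card_perm, Fintype.card_subtype]
    rfl
  refine ⟨(Finset.univ.image Φ) \ {S}, ?_, ?_, ?_⟩
  · calc (∏ d ∈ PJ I, (Jd I d).card.factorial) - 1
        = (Finset.univ.image Φ).card - ({S} : Finset (Schedule I)).card := by
          rw [Finset.card_image_of_injective _ hΦinj, Finset.card_univ, hcard,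
            Finset.card_singleton]
      _ ≤ _ := Finset.le_card_sdiff _ _
  · simp
  · intro S' hS'
    obtain ⟨π, _, rfl⟩ := Finset.mem_image.mp (Finset.mem_sdiff.mp hS').1
    exact ⟨permSched_feasible S hS _ _, permSched_equiv S _ _⟩
end

section
/- If a BPMSTP instance admits at least one feasible schedule, then the number |P_J| of distinct processing times satisfies |P_J| ≤ ⌊(−1 + √(1 + 8·M·K))/2⌋, where M is the number of machines and K the number of time slots. -/
/-! The distinct processing times are distinct positive integers, so `n = |P_J|` of them sum to
at least `n (n + 1) / 2`. Their sum is at most the total processing time, and in any schedule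
the jobs occupy pairwise different (machine, slot) pairs, of which there are `M K`. Solving
`n (n + 1) ≤ 2 M K` for `n` gives the bound. -/

open Finset

theorem Finset.card_mul_card_add_one_le_two_mul_sum {s : Finset ℕ} (hs : 0 ∉ s) :
    #s * (#s + 1) ≤ 2 * ∑ d ∈ s, d := by
  induction s using Finset.induction_on_max with
  | empty => simp
  | insert a s hlt ih =>
    have ha : a ∉ s := fun h => (hlt a h).false
    have hcard : #s < a := by
      have hsub : s ⊆ Ioo 0 a := fun x hx =>
        mem_Ioo.2 ⟨Nat.pos_of_ne_zero fun h => hs (h ▸ mem_insert_of_mem hx), hlt x hx⟩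
      have ha0 : a ≠ 0 := fun h => hs (h ▸ mem_insert_self a s)
      have := card_le_card hsub
      simp only [Nat.card_Ioo] at this
      omega
    rw [card_insert_of_notMem ha, sum_insert ha]
    have := ih fun h => hs (mem_insert_of_mem h)
    nlinarith

theorem sum_PJ_le_sum_p (I : BInstance) : ∑ d ∈ PJ I, d ≤ ∑ j, I.p j :=
  sum_image_le_of_nonneg fun _ _ => Nat.zero_le _

theorem zero_notMem_PJ (I : BInstance) : 0 ∉ PJ I := by
  simp only [PJ, mem_image, mem_univ, true_and, not_exists]
  exact fun j hj => by simpa [hj] using (I.hp j).1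

/-- Counting (job, slot) pairs: a slot on a machine holds at most one job. -/
theorem Schedule.sum_p_le_M_mul_K {I : BInstance} (S : Schedule I) : ∑ j, I.p j ≤ I.M * I.K := by
  have hinj : Set.InjOn (fun x : Σ _ : Fin I.N, ℕ => (S.mach x.1, x.2)) (univ.sigma S.slots) := by
    rintro ⟨j, t⟩ hj ⟨j', t'⟩ hj' heq
    simp only [coe_sigma, Set.mem_sigma_iff, mem_coe] at hj hj'
    simp only [Prod.mk.injEq] at heq
    obtain ⟨hm, rfl⟩ := heq
    obtain rfl : j = j' := by
      by_contra hjj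
      exact disjoint_left.1 (S.disj j j' hjj hm) hj.2 hj'.2
    rfl
  calc ∑ j, I.p j = #(univ.sigma S.slots) := by simp [card_sigma, S.slots_card]
    _ ≤ #(univ ×ˢ Icc 1 I.K) := card_le_card_of_injOn _ (fun x hx => by
        simpa using S.slots_subset _ (mem_sigma.1 hx).2) hinj
    _ = I.M * I.K := by simp

theorem le_floor_of_mul_succ_le_two_mul {n m : ℕ} (h : n * (n + 1) ≤ 2 * m) :
    n ≤ ⌊(-1 + Real.sqrt (1 + 8 * (m : ℝ))) / 2⌋₊ := by
  apply Nat.le_floor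
  have hsq : (2 * (n : ℝ) + 1) ^ 2 ≤ 1 + 8 * (m : ℝ) := by
    have : (n : ℝ) * (n + 1) ≤ 2 * m := by exact_mod_cast h
    nlinarith
  have := Real.le_sqrt_of_sq_le hsq
  linarith

/-- If a BPMSTP instance admits a feasible schedule, then
`|P_J| ≤ ⌊(−1 + √(1 + 8·M·K)) / 2⌋`. -/
theorem statement2 (I : BInstance) (h : ∃ S : Schedule I, S.Feasible) :
    (PJ I).card ≤ ⌊(-1 + Real.sqrt (1 + 8 * (I.M : ℝ) * (I.K : ℝ))) / 2⌋₊ := by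
  obtain ⟨S, -⟩ := h
  have hload : (PJ I).card * ((PJ I).card + 1) ≤ 2 * (I.M * I.K) :=
    calc (PJ I).card * ((PJ I).card + 1) ≤ 2 * ∑ d ∈ PJ I, d :=
          card_mul_card_add_one_le_two_mul_sum (zero_notMem_PJ I)
      _ ≤ 2 * ∑ j, I.p j := by gcongr; exact sum_PJ_le_sum_p I
      _ ≤ 2 * (I.M * I.K) := by gcongr; exact S.sum_p_le_M_mul_K
  simpa [mul_assoc] using le_floor_of_mul_succ_le_two_mul hload
end

section
/- For every split-schedule S of a BPMSTP instance there exists a feasible schedule S' that is equivalent to S, i.e., C_max(S') = C_max(S) and E(S') = E(S). -/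
/-- Lay out blocks of sizes `q j` consecutively starting at `start`. -/
lemma layout_lemma {ι : Type*} [DecidableEq ι] (L : Finset ι) (q : ι → ℕ) :
    ∀ start : ℕ, ∃ T' : ι → Finset ℕ,
      (∀ j ∈ L, ∃ s, T' j = Finset.Ico s (s + q j)) ∧
      (∀ j ∈ L, ∀ j' ∈ L, j ≠ j' → Disjoint (T' j) (T' j')) ∧
      L.biUnion T' = Finset.Ico start (start + ∑ j ∈ L, q j) := by
  induction L using Finset.induction_on with
  | empty =>
      intro start
      exact ⟨fun _ => ∅, by simp, by simp, by simp⟩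
  | @insert a s ha ih =>
      intro start
      obtain ⟨T'', h1, h2, h3⟩ := ih (start + q a)
      have hne' : ∀ j ∈ s, j ≠ a := by intro j hj h; subst h; exact ha hj
      refine ⟨Function.update T'' a (Finset.Ico start (start + q a)), ?_, ?_, ?_⟩
      · intro j hj
        rcases Finset.mem_insert.1 hj with rfl | hj
        · exact ⟨start, by simp⟩
        · rw [Function.update_of_ne (hne' j hj)]
          exact h1 j hj
      · have key : ∀ j ∈ s, Disjoint (Finset.Ico start (start + q a)) (T'' j) := by
          intro j hj
          have hsub : T'' j ⊆ Finset.Ico (start + q a) (start + q a + ∑ i ∈ s, q i) :=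
            h3 ▸ Finset.subset_biUnion_of_mem T'' hj
          exact Finset.disjoint_left.2 fun x hx hx' => by
            have := (Finset.mem_Ico.1 (hsub hx')).1
            have := (Finset.mem_Ico.1 hx).2
            omega
        intro j hj j' hj' hne
        rcases Finset.mem_insert.1 hj with h | hjs
        · subst h
          rcases Finset.mem_insert.1 hj' with h' | hjs'
          · exact absurd h'.symm hne
          · rw [Function.update_self, Function.update_of_ne (hne' j' hjs')]
            exact key j' hjs'
        · rcases Finset.mem_insert.1 hj' with h' | hjs'
          · subst h'
            rw [Function.update_self, Function.update_of_ne (hne' j hjs)]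
            exact (key j hjs).symm
          · rw [Function.update_of_ne (hne' j hjs), Function.update_of_ne (hne' j' hjs')]
            exact h2 j hjs j' hjs' hne
      · rw [Finset.biUnion_insert, Function.update_self]
        have : s.biUnion (Function.update T'' a (Finset.Ico start (start + q a)))
            = s.biUnion T'' := by
          apply Finset.biUnion_congr rfl
          intro j hj
          rw [Function.update_of_ne (hne' j hj)]
        rw [this, h3, Finset.sum_insert ha,
          Finset.Ico_union_Ico_eq_Ico (Nat.le_add_right _ _) (Nat.le_add_right _ _)]
        ring_nf

/-- Core lemma: disjoint finite sets whose spans lie in the union can be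
rearranged into intervals of the same sizes with the same union. -/
lemma split_core {ι : Type*} [DecidableEq ι] (n : ℕ) :
    ∀ F : Finset ι, F.card ≤ n → ∀ T : ι → Finset ℕ,
    (∀ j ∈ F, (T j).Nonempty) →
    (∀ j ∈ F, ∀ j' ∈ F, j ≠ j' → Disjoint (T j) (T j')) →
    (∀ j ∈ F, ∀ m ∈ T j, ∀ M ∈ T j, ∀ t, m ≤ t → t ≤ M → t ∈ F.biUnion T) →
    ∃ T' : ι → Finset ℕ,
      (∀ j ∈ F, ∃ s, T' j = Finset.Ico s (s + (T j).card)) ∧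
      (∀ j ∈ F, ∀ j' ∈ F, j ≠ j' → Disjoint (T' j) (T' j')) ∧
      F.biUnion T' = F.biUnion T := by
  induction n with
  | zero =>
      intro F hF T _ _ _
      have hF0 : F = ∅ := Finset.card_eq_zero.1 (Nat.le_zero.1 hF)
      subst hF0
      exact ⟨T, by simp, by simp, rfl⟩
  | succ n ih =>
      intro F hF T hne hdisj hsplit
      rcases Finset.eq_empty_or_nonempty F with rfl | ⟨j0, hj0⟩
      · exact ⟨T, by simp, by simp, rfl⟩
      have hO : (F.biUnion T).Nonempty :=
        ⟨(T j0).min' (hne j0 hj0), Finset.mem_biUnion.2 ⟨j0, hj0, Finset.min'_mem _ _⟩⟩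
      set O := F.biUnion T with hOdef
      set a := O.min' hO with ha
      set b := Nat.findGreatest (fun x => Finset.Icc a x ⊆ O) (O.max' hO) with hb
      have hPa : Finset.Icc a a ⊆ O := by
        intro x hx
        rw [Finset.mem_Icc] at hx
        have : x = a := le_antisymm hx.2 hx.1
        subst this
        exact O.min'_mem hO
      have haM : a ≤ O.max' hO := O.min'_le _ (O.max'_mem hO)
      have hab : Finset.Icc a b ⊆ O := Nat.findGreatest_spec (P := fun x => Finset.Icc a x ⊆ O) haM hPa
      have haleb : a ≤ b := Nat.le_findGreatest (P := fun x => Finset.Icc a x ⊆ O) haM hPa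
      have hb1 : b + 1 ∉ O := by
        intro hmem
        have hP : Finset.Icc a (b+1) ⊆ O := by
          intro x hx
          rw [Finset.mem_Icc] at hx
          rcases Nat.lt_or_ge x (b+1) with h | h
          · exact hab (Finset.mem_Icc.2 ⟨hx.1, by omega⟩)
          · have : x = b + 1 := le_antisymm hx.2 h
            subst this; exact hmem
        have hle : b + 1 ≤ O.max' hO := O.le_max' _ hmem
        exact Nat.findGreatest_is_greatest (P := fun x => Finset.Icc a x ⊆ O) (Nat.lt_succ_self b) hle hP
      classical
      set L := F.filter (fun j => T j ⊆ Finset.Icc a b) with hL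
      set R := F.filter (fun j => ¬ (T j ⊆ Finset.Icc a b)) with hRdef
      -- every element of a job in R is ≥ b + 2
      have hR : ∀ j ∈ R, ∀ x ∈ T j, b + 2 ≤ x := by
        intro j hj x hx
        rw [hRdef, Finset.mem_filter] at hj
        obtain ⟨hjF, hnsub⟩ := hj
        have hnej := hne j hjF
        set m := (T j).min' hnej with hm
        have hmmem : m ∈ T j := (T j).min'_mem hnej
        have ham : a ≤ m := O.min'_le _ (Finset.mem_biUnion.2 ⟨j, hjF, hmmem⟩)
        have hmb : ¬ (m ≤ b) := by
          intro hmb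
          apply hnsub
          intro y hy
          rw [Finset.mem_Icc]
          refine ⟨le_trans ham ((T j).min'_le _ hy), ?_⟩
          by_contra hyb
          push_neg at hyb
          exact hb1 (hsplit j hjF m hmmem y hy (b+1) (by omega) (by omega))
        push_neg at hmb
        have : m ≠ b + 1 := by
          intro h
          exact hb1 (h ▸ Finset.mem_biUnion.2 ⟨j, hjF, hmmem⟩)
        have := (T j).min'_le _ hx
        omega
      have hLunion : L.biUnion T = Finset.Icc a b := by
        apply Finset.Subset.antisymm
        · intro x hx
          obtain ⟨j, hj, hxj⟩ := Finset.mem_biUnion.1 hx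
          exact (Finset.mem_filter.1 hj).2 hxj
        · intro x hx
          have hxO : x ∈ O := hab hx
          obtain ⟨j, hj, hxj⟩ := Finset.mem_biUnion.1 hxO
          by_cases hc : T j ⊆ Finset.Icc a b
          · exact Finset.mem_biUnion.2 ⟨j, Finset.mem_filter.2 ⟨hj, hc⟩, hxj⟩
          · have := hR j (Finset.mem_filter.2 ⟨hj, hc⟩) x hxj
            rw [Finset.mem_Icc] at hx
            omega
      have hsum : ∑ j ∈ L, (T j).card = b + 1 - a := by
        rw [← Nat.card_Icc, ← hLunion]
        exact (Finset.card_biUnion (fun j hj j' hj' hne' =>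
          hdisj j (Finset.mem_filter.1 hj).1 j' (Finset.mem_filter.1 hj').1 hne')).symm
      obtain ⟨TL, hTL1, hTL2, hTL3⟩ := layout_lemma L (fun j => (T j).card) a
      rw [hsum] at hTL3
      have hTL3' : L.biUnion TL = Finset.Icc a b := by
        rw [hTL3, Nat.add_sub_cancel' (by omega), Finset.Ico_add_one_right_eq_Icc]
      -- the job containing a is in L, so R is strictly smaller
      have hLne : ∃ j ∈ F, j ∉ R := by
        obtain ⟨j, hj, hxj⟩ := Finset.mem_biUnion.1 (O.min'_mem hO)
        refine ⟨j, hj, ?_⟩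
        intro hjR
        exact absurd (hR j hjR a hxj) (by omega)
      have hRcard : R.card ≤ n := by
        obtain ⟨j, hjF, hjR⟩ := hLne
        have : R ⊂ F := ⟨Finset.filter_subset _ _, fun h => hjR (h hjF)⟩
        have := Finset.card_lt_card this
        omega
      have hRsub : R ⊆ F := Finset.filter_subset _ _
      have hRsplit : ∀ j ∈ R, ∀ m ∈ T j, ∀ M ∈ T j, ∀ t, m ≤ t → t ≤ M →
          t ∈ R.biUnion T := by
        intro j hj m hm M hM t hmt htM
        have htO : t ∈ O := hsplit j (hRsub hj) m hm M hM t hmt htM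
        obtain ⟨j', hj', hxj'⟩ := Finset.mem_biUnion.1 htO
        have htb : b + 2 ≤ t := le_trans (hR j hj m hm) hmt
        by_cases hc : T j' ⊆ Finset.Icc a b
        · have := (Finset.mem_Icc.1 (hc hxj')).2
          omega
        · exact Finset.mem_biUnion.2 ⟨j', Finset.mem_filter.2 ⟨hj', hc⟩, hxj'⟩
      obtain ⟨TR, hTR1, hTR2, hTR3⟩ := ih R hRcard T
        (fun j hj => hne j (hRsub hj))
        (fun j hj j' hj' h => hdisj j (hRsub hj) j' (hRsub hj') h)
        hRsplit
      refine ⟨fun j => if T j ⊆ Finset.Icc a b then TL j else TR j, ?_, ?_, ?_⟩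
      · intro j hj
        by_cases hc : T j ⊆ Finset.Icc a b
        · simpa [hc] using hTL1 j (Finset.mem_filter.2 ⟨hj, hc⟩)
        · simpa [hc] using hTR1 j (Finset.mem_filter.2 ⟨hj, hc⟩)
      · intro j hj j' hj' hne'
        have hTLsub : ∀ i ∈ L, TL i ⊆ Finset.Icc a b :=
          fun i hi => hTL3' ▸ Finset.subset_biUnion_of_mem TL hi
        have hTRsub : ∀ i ∈ R, ∀ x ∈ TR i, b + 2 ≤ x := by
          intro i hi x hx
          have : x ∈ R.biUnion T := hTR3 ▸ Finset.mem_biUnion.2 ⟨i, hi, hx⟩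
          obtain ⟨i', hi', hxi'⟩ := Finset.mem_biUnion.1 this
          exact hR i' hi' x hxi'
        by_cases hc : T j ⊆ Finset.Icc a b <;> by_cases hc' : T j' ⊆ Finset.Icc a b <;>
          simp only [hc, hc', if_true, if_false, if_pos, if_neg, not_false_iff]
        · exact hTL2 j (Finset.mem_filter.2 ⟨hj, hc⟩) j' (Finset.mem_filter.2 ⟨hj', hc'⟩) hne'
        · refine Finset.disjoint_left.2 fun x hx hx' => ?_
          have h1 := (Finset.mem_Icc.1 (hTLsub j (Finset.mem_filter.2 ⟨hj, hc⟩) hx)).2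
          have h2 := hTRsub j' (Finset.mem_filter.2 ⟨hj', hc'⟩) x hx'
          omega
        · refine Finset.disjoint_left.2 fun x hx hx' => ?_
          have h1 := (Finset.mem_Icc.1 (hTLsub j' (Finset.mem_filter.2 ⟨hj', hc'⟩) hx')).2
          have h2 := hTRsub j (Finset.mem_filter.2 ⟨hj, hc⟩) x hx
          omega
        · exact hTR2 j (Finset.mem_filter.2 ⟨hj, hc⟩) j' (Finset.mem_filter.2 ⟨hj', hc'⟩) hne'
      · have hFLR : F = L ∪ R := (Finset.filter_union_filter_not_eq _ F).symm
        have hbiL : L.biUnion (fun j => if T j ⊆ Finset.Icc a b then TL j else TR j)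
            = L.biUnion TL := Finset.biUnion_congr rfl fun j hj => by
          simp [(Finset.mem_filter.1 hj).2]
        have hbiR : R.biUnion (fun j => if T j ⊆ Finset.Icc a b then TL j else TR j)
            = R.biUnion TR := Finset.biUnion_congr rfl fun j hj => by
          simp [(Finset.mem_filter.1 hj).2]
        have hbu : ∀ f : ι → Finset ℕ, (L ∪ R).biUnion f = L.biUnion f ∪ R.biUnion f := by
          intro f
          ext x
          simp [Finset.mem_biUnion, Finset.mem_union, or_and_right, exists_or]
        conv_lhs => rw [hFLR]
        rw [hbu, hbiL, hbiR, hTL3', hTR3, ← hLunion, hOdef, hFLR, hbu]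



/-- For every split-schedule `S` there exists a feasible schedule
`S'` equivalent to `S`, i.e., with the same makespan and the same TEC. -/
theorem statement5 (I : BInstance) (S : Schedule I) (hS : S.IsSplit) :
    ∃ S' : Schedule I, S'.Feasible ∧ S'.Cmax = S.Cmax ∧ S'.TEC = S.TEC := by
  classical
  set Fm : Fin I.M → Finset (Fin I.N) :=
    fun h => Finset.univ.filter (fun j => S.mach j = h) with hFm
  have hjF : ∀ j : Fin I.N, j ∈ Fm (S.mach j) :=
    fun j => Finset.mem_filter.2 ⟨Finset.mem_univ _, rfl⟩
  have key : ∀ h : Fin I.M, ∃ T' : Fin I.N → Finset ℕ,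
      (∀ j ∈ Fm h, ∃ s, T' j = Finset.Ico s (s + (S.slots j).card)) ∧
      (∀ j ∈ Fm h, ∀ j' ∈ Fm h, j ≠ j' → Disjoint (T' j) (T' j')) ∧
      (Fm h).biUnion T' = (Fm h).biUnion S.slots := by
    intro h
    apply split_core (Fm h).card (Fm h) le_rfl S.slots
    · intro j _
      exact S.slots_nonempty j
    · intro j hj j' hj' hne
      exact S.disj j j' hne
        (((Finset.mem_filter.1 hj).2).trans ((Finset.mem_filter.1 hj').2).symm)
    · intro j hj m hm M hM t hmt htM
      have h1 : (S.slots j).min' (S.slots_nonempty j) ≤ t :=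
        le_trans (Finset.min'_le _ _ hm) hmt
      have h2 : t ≤ (S.slots j).max' (S.slots_nonempty j) :=
        le_trans htM (Finset.le_max' _ _ hM)
      obtain ⟨j', hmach, ht⟩ := hS j t h1 h2
      have hjh : S.mach j = h := (Finset.mem_filter.1 hj).2
      exact Finset.mem_biUnion.2
        ⟨j', Finset.mem_filter.2 ⟨Finset.mem_univ _, by rw [hmach, hjh]⟩, ht⟩
  choose T' hT1 hT2 hT3 using key
  have hsub : ∀ j : Fin I.N, T' (S.mach j) j ⊆ Finset.Icc 1 I.K := by
    intro j
    refine (Finset.subset_biUnion_of_mem (T' (S.mach j)) (hjF j)).trans ?_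
    rw [hT3]
    exact Finset.biUnion_subset.2 fun i _ => S.slots_subset i
  have hcard : ∀ j : Fin I.N, (T' (S.mach j) j).card = I.p j := by
    intro j
    obtain ⟨s, hs⟩ := hT1 (S.mach j) j (hjF j)
    rw [hs, Nat.card_Ico, S.slots_card]
    omega
  refine ⟨{ mach := S.mach, slots := fun j => T' (S.mach j) j,
            slots_subset := hsub, slots_card := hcard, disj := ?_ }, ?_, ?_, ?_⟩
  · intro j j' hne heq
    have hj' : j' ∈ Fm (S.mach j) := Finset.mem_filter.2 ⟨Finset.mem_univ _, heq.symm⟩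
    show Disjoint (T' (S.mach j) j) (T' (S.mach j') j')
    rw [← heq]
    exact hT2 (S.mach j) j (hjF j) j' hj' hne
  · -- feasibility
    intro j
    obtain ⟨s, hs⟩ := hT1 (S.mach j) j (hjF j)
    refine ⟨s, ?_⟩
    show T' (S.mach j) j = Finset.Ico s (s + I.p j)
    rw [hs, S.slots_card]
  · -- makespan
    have hU : Finset.univ.biUnion (fun j => T' (S.mach j) j)
        = Finset.univ.biUnion S.slots := by
      ext x
      simp only [Finset.mem_biUnion, Finset.mem_univ, true_and]
      constructor
      · rintro ⟨j, hx⟩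
        have hx2 : x ∈ (Fm (S.mach j)).biUnion S.slots := by
          rw [← hT3]
          exact Finset.mem_biUnion.2 ⟨j, hjF j, hx⟩
        obtain ⟨j', _, hx'⟩ := Finset.mem_biUnion.1 hx2
        exact ⟨j', hx'⟩
      · rintro ⟨j, hx⟩
        have hx2 : x ∈ (Fm (S.mach j)).biUnion (T' (S.mach j)) := by
          rw [hT3]
          exact Finset.mem_biUnion.2 ⟨j, hjF j, hx⟩
        obtain ⟨j', hj', hx'⟩ := Finset.mem_biUnion.1 hx2
        refine ⟨j', ?_⟩
        rwa [(Finset.mem_filter.1 hj').2]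
    show (Finset.univ.sup fun j => (T' (S.mach j) j).sup id)
        = Finset.univ.sup fun j => (S.slots j).sup id
    rw [← Finset.sup_biUnion, ← Finset.sup_biUnion, hU]
  · -- TEC
    have key2 : ∀ (sl : Fin I.N → Finset ℕ),
        (∀ j j', j ≠ j' → S.mach j = S.mach j' → Disjoint (sl j) (sl j')) →
        (∑ j, I.u (S.mach j) * ∑ t ∈ sl j, I.c t)
          = ∑ h : Fin I.M, I.u h * ∑ t ∈ (Fm h).biUnion sl, I.c t := by
      intro sl hd
      rw [← Finset.sum_fiberwise_of_maps_to (g := S.mach)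
        (fun j _ => Finset.mem_univ (S.mach j))
        (fun j => I.u (S.mach j) * ∑ t ∈ sl j, I.c t)]
      refine Finset.sum_congr rfl fun h _ => ?_
      have hdisj : Set.PairwiseDisjoint ↑(Fm h) sl := by
        intro j hj j' hj' hne
        exact hd j j' hne
          (((Finset.mem_filter.1 hj).2).trans ((Finset.mem_filter.1 hj').2).symm)
      rw [Finset.sum_biUnion hdisj, Finset.mul_sum]
      refine Finset.sum_congr rfl fun j hj => ?_
      rw [(Finset.mem_filter.1 hj).2]
    show (∑ j, I.u (S.mach j) * ∑ t ∈ T' (S.mach j) j, I.c t)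
        = ∑ j, I.u (S.mach j) * ∑ t ∈ S.slots j, I.c t
    rw [key2 S.slots S.disj]
    rw [key2 (fun j => T' (S.mach j) j) (by
      intro j j' hne heq
      have hj' : j' ∈ Fm (S.mach j) := Finset.mem_filter.2 ⟨Finset.mem_univ _, heq.symm⟩
      show Disjoint (T' (S.mach j) j) (T' (S.mach j') j')
      rw [← heq]
      exact hT2 (S.mach j) j (hjF j) j' hj' hne)]
    refine Finset.sum_congr rfl fun h _ => ?_
    have huni : (Fm h).biUnion (fun j => T' (S.mach j) j) = (Fm h).biUnion S.slots := by
      rw [← hT3 h]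
      exact Finset.biUnion_congr rfl fun j hj => by rw [(Finset.mem_filter.1 hj).2]
    rw [huni]
end

section
/- Let S be a schedule of a BPMSTP instance, and let E₀, E₁ ⊆ T with |E₀| = |E₁| = p be slot sets on machines h₀ and h₁ respectively (with E₀ ∩ E₁ = ∅ if h₀ = h₁) such that under S: a single job j* with p_{j*} = p occupies exactly the slots E₁ on h₁; a set J₀ of jobs occupies α slots inside E₀ on h₀ (each such job's slot set is contained in E₀); and no other job of S uses any slot of E₀ on h₀ or of E₁ on h₁. Let S' be any schedule that agrees with S on all jobs outside J₀ ∪ {j*}, assigns j* to all of E₀ on h₀, and assigns each job of J₀ to slots contained in E₁ on h₁. If u_{h₀}·∑_{t ∈ E₀} c_t + u_{h₁}·min{∑_{t ∈ A} c_t : A ⊆ E₁, |A| = α} ≥ u_{h₀}·∑_{j ∈ J₀} ∑_{t ∈ T_j} c_t + u_{h₁}·∑_{t ∈ E₁} c_t, then E(S') ≥ E(S), i.e., the exchange cannot improve the total energy cost. -/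
/-- bounding condition for an EPS move. If the lower bound on the
cost of the exchanged configuration is at least the original cost of the two
regions, the exchange cannot improve the total energy cost. -/
theorem statement12 (I : BInstance) (S S' : Schedule I)
    (h₀ h₁ : Fin I.M) (E₀ E₁ : Finset ℕ) (pp : ℕ)
    (hE₀ : E₀ ⊆ Finset.Icc 1 I.K) (hE₁ : E₁ ⊆ Finset.Icc 1 I.K)
    (hcard₀ : E₀.card = pp) (hcard₁ : E₁.card = pp)
    (hd : h₀ = h₁ → Disjoint E₀ E₁)
    (jstar : Fin I.N) (hjp : I.p jstar = pp)
    (hjm : S.mach jstar = h₁) (hjs : S.slots jstar = E₁)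
    (J₀ : Finset (Fin I.N)) (hjstar : jstar ∉ J₀)
    (hJ₀ : ∀ j ∈ J₀, S.mach j = h₀ ∧ S.slots j ⊆ E₀)
    (hother : ∀ j, j ∉ J₀ → j ≠ jstar →
      (S.mach j = h₀ → Disjoint (S.slots j) E₀) ∧
      (S.mach j = h₁ → Disjoint (S.slots j) E₁))
    (hagree : ∀ j, j ∉ J₀ → j ≠ jstar → S'.mach j = S.mach j ∧ S'.slots j = S.slots j)
    (hnewstar : S'.mach jstar = h₀ ∧ S'.slots jstar = E₀)
    (hnewJ₀ : ∀ j ∈ J₀, S'.mach j = h₁ ∧ S'.slots j ⊆ E₁)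
    (hineq : I.u h₀ * ∑ t ∈ E₀, I.c t +
        I.u h₁ * sInf {x : ℝ | ∃ A ⊆ E₁, A.card = ∑ j ∈ J₀, I.p j ∧ x = ∑ t ∈ A, I.c t}
      ≥ I.u h₀ * ∑ j ∈ J₀, ∑ t ∈ S.slots j, I.c t + I.u h₁ * ∑ t ∈ E₁, I.c t) :
    S.TEC ≤ S'.TEC := by
  classical
  set A : Finset ℕ := J₀.biUnion S'.slots with hA
  have hpd : ∀ a ∈ J₀, ∀ b ∈ J₀, a ≠ b → Disjoint (S'.slots a) (S'.slots b) := by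
    intro a ha b hb hne
    exact S'.disj a b hne (by rw [(hnewJ₀ a ha).1, (hnewJ₀ b hb).1])
  have hAsub : A ⊆ E₁ := Finset.biUnion_subset.2 fun j hj => (hnewJ₀ j hj).2
  have hAcard : A.card = ∑ j ∈ J₀, I.p j := by
    rw [Finset.card_biUnion hpd]
    exact Finset.sum_congr rfl fun j _ => S'.slots_card j
  have hAsum : ∑ t ∈ A, I.c t = ∑ j ∈ J₀, ∑ t ∈ S'.slots j, I.c t :=
    Finset.sum_biUnion fun a ha b hb hne => hpd a ha b hb hne
  have hmem : (∑ j ∈ J₀, ∑ t ∈ S'.slots j, I.c t) ∈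
      {x : ℝ | ∃ A ⊆ E₁, A.card = ∑ j ∈ J₀, I.p j ∧ x = ∑ t ∈ A, I.c t} :=
    ⟨A, hAsub, hAcard, hAsum.symm⟩
  have hbdd : BddBelow {x : ℝ | ∃ A ⊆ E₁, A.card = ∑ j ∈ J₀, I.p j ∧ x = ∑ t ∈ A, I.c t} := by
    refine ⟨0, fun x hx => ?_⟩
    obtain ⟨B, _, _, hxB⟩ := hx
    exact hxB ▸ Finset.sum_nonneg fun t _ => I.hc t
  have hinf : sInf {x : ℝ | ∃ A ⊆ E₁, A.card = ∑ j ∈ J₀, I.p j ∧ x = ∑ t ∈ A, I.c t}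
      ≤ ∑ j ∈ J₀, ∑ t ∈ S'.slots j, I.c t := csInf_le hbdd hmem
  -- decompose TEC
  set Q : Finset (Fin I.N) := insert jstar J₀ with hQ
  have hQsub : Q ⊆ Finset.univ := Finset.subset_univ _
  have hsplit : ∀ (T : Schedule I),
      T.TEC = (∑ j ∈ Q, I.u (T.mach j) * ∑ t ∈ T.slots j, I.c t)
        + ∑ j ∈ Finset.univ \ Q, I.u (T.mach j) * ∑ t ∈ T.slots j, I.c t := by
    intro T
    rw [Schedule.TEC, ← Finset.sum_sdiff hQsub]
    ring
  have hrest : ∑ j ∈ Finset.univ \ Q, I.u (S.mach j) * ∑ t ∈ S.slots j, I.c t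
      = ∑ j ∈ Finset.univ \ Q, I.u (S'.mach j) * ∑ t ∈ S'.slots j, I.c t := by
    refine Finset.sum_congr rfl fun j hj => ?_
    rw [Finset.mem_sdiff, hQ, Finset.mem_insert] at hj
    push_neg at hj
    obtain ⟨hne, hnotin⟩ := hj.2
    obtain ⟨hm, hs⟩ := hagree j hnotin hne
    rw [hm, hs]
  have hQS : ∑ j ∈ Q, I.u (S.mach j) * ∑ t ∈ S.slots j, I.c t
      = I.u h₁ * ∑ t ∈ E₁, I.c t + I.u h₀ * ∑ j ∈ J₀, ∑ t ∈ S.slots j, I.c t := by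
    rw [hQ, Finset.sum_insert hjstar, hjm, hjs, Finset.mul_sum]
    have e : ∀ j ∈ J₀, I.u (S.mach j) * ∑ t ∈ S.slots j, I.c t
        = I.u h₀ * ∑ t ∈ S.slots j, I.c t := fun j hj => by rw [(hJ₀ j hj).1]
    rw [Finset.sum_congr rfl e, ← Finset.mul_sum, ← Finset.mul_sum]
  have hQS' : ∑ j ∈ Q, I.u (S'.mach j) * ∑ t ∈ S'.slots j, I.c t
      = I.u h₀ * ∑ t ∈ E₀, I.c t + I.u h₁ * ∑ j ∈ J₀, ∑ t ∈ S'.slots j, I.c t := by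
    rw [hQ, Finset.sum_insert hjstar, hnewstar.1, hnewstar.2, Finset.mul_sum]
    have e : ∀ j ∈ J₀, I.u (S'.mach j) * ∑ t ∈ S'.slots j, I.c t
        = I.u h₁ * ∑ t ∈ S'.slots j, I.c t := fun j hj => by rw [(hnewJ₀ j hj).1]
    rw [Finset.sum_congr rfl e, ← Finset.mul_sum, ← Finset.mul_sum]
  rw [hsplit S, hsplit S', hrest, hQS, hQS']
  have key : I.u h₁ * ∑ t ∈ E₁, I.c t + I.u h₀ * ∑ j ∈ J₀, ∑ t ∈ S.slots j, I.c t
      ≤ I.u h₀ * ∑ t ∈ E₀, I.c t + I.u h₁ * ∑ j ∈ J₀, ∑ t ∈ S'.slots j, I.c t := by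
    have h1 : I.u h₁ * sInf {x : ℝ | ∃ A ⊆ E₁, A.card = ∑ j ∈ J₀, I.p j ∧ x = ∑ t ∈ A, I.c t}
        ≤ I.u h₁ * ∑ j ∈ J₀, ∑ t ∈ S'.slots j, I.c t :=
      mul_le_mul_of_nonneg_left hinf (I.hu h₁)
    linarith [hineq]
  linarith [key]
end

section
/- For every feasible schedule S of a BPMSTP instance there exists a map y : P_J × H × T → {0, 1} satisfying: (i) for each d ∈ P_J, ∑_{h ∈ H} ∑_{t=1}^{K−d+1} y(d, h, t) = |J_d|, and y(d, h, t) = 0 whenever t > K − d + 1; (ii) for each h ∈ H and t ∈ T, ∑_{d ∈ P_J} ∑_{i = max{1, t−d+1}}^{t} y(d, h, i) ≤ 1; and such that E(S) = ∑_{h ∈ H} u_h ∑_{d ∈ P_J} ∑_{t=1}^{K−d+1} b_{d,t}·y(d, h, t) with b_{d,t} = ∑_{k=t}^{t+d−1} c_k, and C_max(S) = max{t + d − 1 : y(d, h, t) = 1}. -/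
/-!
Encode a feasible schedule by the triples (processing time, machine, start slot) of its jobs and
let `y d h t` count the jobs with triple `(d, h, t)`. A job's start slot is one of its own slots
and jobs sharing a machine have disjoint slots, so no two jobs share a triple and `y` is 0/1.
Every weighted sum of `y` is therefore a sum over the jobs, which turns the cardinality
constraint into counting `J_d`, the capacity constraint into the disjointness of the jobs
running at slot `t` on `h`, and the objective into the TEC, as a job starting at `t` occupies
exactly the slots `t, …, t + p_j - 1`.
-/

namespace Schedule

open Finset

variable {I : BInstance} (S : Schedule I)

def start (j : Fin I.N) : ℕ := (S.slots j).min' (S.slots_nonempty j)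

theorem start_mem_slots (j : Fin I.N) : S.start j ∈ S.slots j := min'_mem _ _

theorem eq_of_mem_slots_of_mach_eq {j j' : Fin I.N} {t : ℕ} (hm : S.mach j = S.mach j')
    (ht : t ∈ S.slots j) (ht' : t ∈ S.slots j') : j = j' := by
  by_contra hne
  exact disjoint_left.mp (S.disj j j' hne hm) ht ht'

theorem eq_of_mach_eq_of_start_eq {j j' : Fin I.N} (hm : S.mach j = S.mach j')
    (hs : S.start j = S.start j') : j = j' :=
  S.eq_of_mem_slots_of_mach_eq hm (S.start_mem_slots j) (hs ▸ S.start_mem_slots j')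

variable {S}

theorem Feasible.slots_eq_Ico (hS : S.Feasible) (j : Fin I.N) :
    S.slots j = Ico (S.start j) (S.start j + I.p j) := by
  obtain ⟨s, hs⟩ := hS j
  have hsj : S.start j = s := by
    have hs_mem : s ∈ S.slots j := hs ▸ mem_Ico.2 ⟨le_rfl, by have := (I.hp j).1; omega⟩
    exact le_antisymm (min'_le _ _ hs_mem) (le_min' _ _ _ fun x hx => (mem_Ico.1 (hs ▸ hx)).1)
  rw [hsj, hs]

theorem Feasible.mem_slots_iff (hS : S.Feasible) {j : Fin I.N} {t : ℕ} :
    t ∈ S.slots j ↔ S.start j ≤ t ∧ t < S.start j + I.p j := by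
  rw [hS.slots_eq_Ico j, mem_Ico]

theorem Feasible.start_mem_Icc (hS : S.Feasible) (j : Fin I.N) :
    S.start j ∈ Icc 1 (I.K - I.p j + 1) := by
  have hp := (I.hp j).1
  have hlast : S.start j + I.p j - 1 ∈ S.slots j := by
    rw [hS.slots_eq_Ico j, mem_Ico]; omega
  have h1 := mem_Icc.1 (S.slots_subset j (S.start_mem_slots j))
  have h2 := mem_Icc.1 (S.slots_subset j hlast)
  rw [mem_Icc]; omega

theorem Feasible.sup_slots (hS : S.Feasible) (j : Fin I.N) :
    (S.slots j).sup id = S.start j + I.p j - 1 := by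
  have hp := (I.hp j).1
  rw [hS.slots_eq_Ico j]
  refine le_antisymm (Finset.sup_le fun t ht => ?_) (le_sup (f := id) ?_)
  · rw [mem_Ico] at ht; simp only [id]; omega
  · rw [mem_Ico]; omega

variable (S)

def startCount (d : ℕ) (h : Fin I.M) (t : ℕ) : ℕ :=
  #{j | I.p j = d ∧ S.mach j = h ∧ S.start j = t}

theorem startCount_le_one (d : ℕ) (h : Fin I.M) (t : ℕ) : S.startCount d h t ≤ 1 :=
  card_le_one.2 fun _ ha _ hb => by
    simp only [mem_filter, mem_univ, true_and] at ha hb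
    exact S.eq_of_mach_eq_of_start_eq (ha.2.1.trans hb.2.1.symm) (ha.2.2.trans hb.2.2.symm)

theorem startCount_pos_iff {d : ℕ} {h : Fin I.M} {t : ℕ} :
    0 < S.startCount d h t ↔ ∃ j, I.p j = d ∧ S.mach j = h ∧ S.start j = t := by
  simp [startCount, card_pos, filter_nonempty_iff]

theorem startCount_self (j : Fin I.N) : S.startCount (I.p j) (S.mach j) (S.start j) = 1 :=
  le_antisymm (S.startCount_le_one _ _ _) (S.startCount_pos_iff.2 ⟨j, rfl, rfl, rfl⟩)

theorem sum_mul_startCount {R : Type*} [CommSemiring R] (F : Fin I.M → ℕ → ℕ → R)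
    (H : Finset (Fin I.M)) (D : Finset ℕ) (T : ℕ → Finset ℕ) :
    ∑ h ∈ H, ∑ d ∈ D, ∑ t ∈ T d, F h d t * (S.startCount d h t : R) =
      ∑ j with I.p j ∈ D ∧ S.mach j ∈ H ∧ S.start j ∈ T (I.p j),
        F (S.mach j) (I.p j) (S.start j) := by
  simp only [startCount, natCast_card_filter, mul_sum, mul_ite, mul_one, mul_zero]
  rw [sum_filter]
  simp_rw [sum_comm (s := T _), sum_comm (s := D), sum_comm (s := H)]
  refine sum_congr rfl fun j _ => ?_
  simp only [ite_and, sum_ite_irrel, sum_ite_eq, sum_const_zero]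

variable {S}

theorem Feasible.mem_of_startCount_pos (hS : S.Feasible) {d : ℕ} {h : Fin I.M} {t : ℕ}
    (hy : 0 < S.startCount d h t) : d ∈ PJ I ∧ t ∈ Icc 1 (I.K - d + 1) := by
  obtain ⟨j, rfl, -, rfl⟩ := S.startCount_pos_iff.1 hy
  exact ⟨mem_image_of_mem _ (mem_univ j), hS.start_mem_Icc j⟩

theorem Feasible.sum_sum_startCount_eq_card (hS : S.Feasible) (d : ℕ) :
    ∑ h, ∑ t ∈ Icc 1 (I.K - d + 1), S.startCount d h t = #(Jd I d) := by
  have := S.sum_mul_startCount (fun _ _ _ => 1) univ {d} (fun d => Icc 1 (I.K - d + 1))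
  simp only [sum_singleton, one_mul, Nat.cast_id, ← card_eq_sum_ones] at this
  rw [this, Jd]
  congr 1
  refine filter_congr fun j _ => ?_
  simp only [mem_singleton, mem_univ, true_and, and_iff_left_iff_imp]
  exact fun _ => hS.start_mem_Icc j

theorem Feasible.sum_sum_startCount_le_one (hS : S.Feasible) (h : Fin I.M) (t : ℕ) :
    ∑ d ∈ PJ I, ∑ i ∈ Icc (max 1 (t - d + 1)) t, S.startCount d h i ≤ 1 := by
  have := S.sum_mul_startCount (fun _ _ _ => 1) {h} (PJ I) (fun d => Icc (max 1 (t - d + 1)) t)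
  simp only [sum_singleton, one_mul, Nat.cast_id, ← card_eq_sum_ones] at this
  rw [this]
  refine card_le_one.2 fun j hj j' hj' => ?_
  simp only [mem_filter, mem_univ, true_and, mem_singleton, mem_Icc, max_le_iff] at hj hj'
  have hmem : ∀ k, t - I.p k + 1 ≤ S.start k → S.start k ≤ t → t ∈ S.slots k :=
    fun k h1 h2 => hS.mem_slots_iff.2 ⟨h2, by omega⟩
  exact S.eq_of_mem_slots_of_mach_eq (hj.2.1.trans hj'.2.1.symm)
    (hmem j hj.2.2.1.2 hj.2.2.2) (hmem j' hj'.2.2.1.2 hj'.2.2.2)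

theorem Feasible.sum_slots_cost (hS : S.Feasible) (j : Fin I.N) :
    ∑ t ∈ S.slots j, I.c t = bcost I (I.p j) (S.start j) := by
  have hp := (I.hp j).1
  rw [bcost, hS.slots_eq_Ico]
  congr 1
  ext t
  simp only [mem_Ico, mem_Icc]
  omega

theorem Feasible.tec_eq (hS : S.Feasible) :
    S.TEC = ∑ h, I.u h * ∑ d ∈ PJ I, ∑ t ∈ Icc 1 (I.K - d + 1),
      bcost I d t * (S.startCount d h t : ℝ) := by
  simp only [mul_sum, ← mul_assoc]
  rw [S.sum_mul_startCount (fun h d t => I.u h * bcost I d t) univ (PJ I)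
    (fun d => Icc 1 (I.K - d + 1)), TEC, filter_true_of_mem fun j _ =>
      ⟨mem_image_of_mem _ (mem_univ j), mem_univ _, hS.start_mem_Icc j⟩]
  simp only [hS.sum_slots_cost]

theorem Feasible.cmax_eq (hS : S.Feasible) :
    S.Cmax = (PJ I ×ˢ univ ×ˢ Icc 1 I.K).sup
      (fun x => if S.startCount x.1 x.2.1 x.2.2 = 1 then x.2.2 + x.1 - 1 else 0) := by
  refine le_antisymm (Finset.sup_le fun j _ => ?_) (Finset.sup_le fun x _ => ?_)
  · have hj : (I.p j, S.mach j, S.start j) ∈ PJ I ×ˢ univ ×ˢ Icc 1 I.K := by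
      have hs := mem_Icc.1 (hS.start_mem_Icc j)
      have hp := I.hp j
      simp only [mem_product, mem_univ, mem_Icc, true_and]
      exact ⟨mem_image_of_mem _ (mem_univ j), hs.1, by omega⟩
    refine (le_sup hj).trans' ?_
    rw [hS.sup_slots, S.startCount_self, if_pos rfl, add_comm]
  · split_ifs with hy
    · obtain ⟨j, hd, -, ht⟩ := S.startCount_pos_iff.1 (hy ▸ one_pos)
      rw [← hd, ← ht, ← hS.sup_slots]
      exact le_sup (f := fun j => (S.slots j).sup id) (mem_univ j)
    · exact Nat.zero_le _

end Schedule

/-- every feasible schedule `S` induces a 0/1 assignment `y`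
satisfying the constraints of Formulation 2, whose TEC and makespan expressions
agree with those of `S`. -/
theorem statement14 (I : BInstance) (S : Schedule I) (hS : S.Feasible) :
    ∃ y : ℕ → Fin I.M → ℕ → ℕ,
      (∀ d h t, y d h t ≤ 1) ∧
      (∀ d h t, y d h t = 1 → d ∈ PJ I ∧ t ∈ Finset.Icc 1 (I.K - d + 1)) ∧
      (∀ d ∈ PJ I,
        ∑ h : Fin I.M, ∑ t ∈ Finset.Icc 1 (I.K - d + 1), y d h t = (Jd I d).card) ∧
      (∀ h : Fin I.M, ∀ t ∈ Finset.Icc 1 I.K,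
        ∑ d ∈ PJ I, ∑ i ∈ Finset.Icc (max 1 (t - d + 1)) t, y d h i ≤ 1) ∧
      S.TEC = ∑ h : Fin I.M, I.u h * ∑ d ∈ PJ I, ∑ t ∈ Finset.Icc 1 (I.K - d + 1),
        bcost I d t * (y d h t : ℝ) ∧
      S.Cmax = ((PJ I) ×ˢ (Finset.univ : Finset (Fin I.M)) ×ˢ Finset.Icc 1 I.K).sup
        (fun x => if y x.1 x.2.1 x.2.2 = 1 then x.2.2 + x.1 - 1 else 0) :=
  ⟨S.startCount, S.startCount_le_one, fun _ _ _ hy => hS.mem_of_startCount_pos (hy ▸ one_pos),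
    fun d _ => hS.sum_sum_startCount_eq_card d, fun h t _ => hS.sum_sum_startCount_le_one h t,
    hS.tec_eq, hS.cmax_eq⟩
end
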